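/- arXiv:1510.01753 — 5 statements merged into one kernel-verified Lean document; each statement's English description precedes it below -/
import Mathlib

section
/- Let m ≥ 1 and let Σ be an m-letter alphabet. Let L be a set of finite words over Σ that is closed under taking factors, contains the empty word, and contains every word of length 1. For i ≥ 0 let n_i be the number of words of length i in L, and let L' be the set of words w over Σ such that w is not in L but the prefix of w of length |w|−1 is in L. Let (a_j)_{j≥1} be nonnegative reals and let x_0 > 0 be such that the series Σ_{j≥1} a_j x_0^j converges and 1 − m·x_0 + Σ_{j≥1} a_j x_0^j = 0. If for every i ≥ 1 the number of words of length i in L' is at most Σ_{j=1}^{i} a_j · n_{i−j}, then n_i ≥ x_0^{−i} for every i ≥ 0. -/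
/-!
Appending a letter to a word of length `i` in `L` gives a word of length `i + 1` that lies either
in `L` or in `L'`, so `m·n_i ≤ n_{i+1} + |L'_{i+1}| ≤ n_{i+1} + ∑_{j=1}^{i+1} a_j n_{i+1-j}`.
By strong induction, `n_k ≤ x₀ n_{k+1}` for all `k`: if it holds below `i`, then
`n_{i+1-j} ≤ x₀^{j-1} n_i`, the convolution is at most `(n_i / x₀) ∑ a_j x₀^j = (m - 1/x₀) n_i`,
and the recurrence becomes `n_i ≤ x₀ n_{i+1}`. Chaining these from `n_0 = 1` gives `n_i ≥ x₀^{-i}`.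
-/

open Finset

theorem le_pow_mul_of_le_mul_succ {R : Type*} [Semiring R] [PartialOrder R] [IsOrderedRing R]
    {s : ℕ → R} {x : R} (hx : 0 ≤ x) {i : ℕ} (h : ∀ k < i, s k ≤ x * s (k + 1))
    {k : ℕ} (hk : k ≤ i) : s k ≤ x ^ (i - k) * s i := by
  induction hk using Nat.decreasingInduction with
  | self => simp
  | of_succ k hk ih =>
    calc s k ≤ x * s (k + 1) := h k hk
      _ ≤ x * (x ^ (i - (k + 1)) * s i) := mul_le_mul_of_nonneg_left ih hx
      _ = x ^ (i - k) * s i := by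
        rw [← mul_assoc, ← pow_succ', show i - (k + 1) + 1 = i - k by omega]

theorem sum_Icc_one_le_tsum_succ {f : ℕ → ℝ} (hf : ∀ j, 0 ≤ f j)
    (hsum : Summable fun j => f (j + 1)) (N : ℕ) :
    ∑ j ∈ Icc 1 N, f j ≤ ∑' j, f (j + 1) := by
  have hshift : ∑ j ∈ Icc 1 N, f j = ∑ j ∈ range N, f (j + 1) := by
    rw [← Finset.Ico_add_one_right_eq_Icc, sum_Ico_eq_sum_range]
    simp [add_comm]
  exact hshift ▸ hsum.sum_le_tsum _ fun j _ => hf _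

theorem le_mul_succ_of_le_succ_add_convolution {s a : ℕ → ℝ} {m x : ℝ} (hs : ∀ i, 0 ≤ s i)
    (ha : ∀ j, 0 ≤ a j) (hx : 0 < x) (hsum : Summable fun j => a (j + 1) * x ^ (j + 1))
    (hroot : 1 - m * x + ∑' j, a (j + 1) * x ^ (j + 1) = 0)
    (hrec : ∀ i, m * s i ≤ s (i + 1) + ∑ j ∈ Icc 1 (i + 1), a j * s (i + 1 - j)) (i : ℕ) :
    s i ≤ x * s (i + 1) := by
  induction i using Nat.strong_induction_on with
  | _ i ih =>
  have hterm : ∀ j ∈ Icc 1 (i + 1), x * (a j * s (i + 1 - j)) ≤ a j * x ^ j * s i := by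
    intro j hj
    obtain ⟨hj1, hji⟩ := mem_Icc.1 hj
    have hchain := le_pow_mul_of_le_mul_succ hx.le ih (k := i + 1 - j) (by omega)
    rw [show i - (i + 1 - j) = j - 1 by omega] at hchain
    calc x * (a j * s (i + 1 - j)) ≤ x * (a j * (x ^ (j - 1) * s i)) := by
          gcongr; exact ha j
      _ = a j * x ^ (j - 1 + 1) * s i := by ring
      _ = a j * x ^ j * s i := by rw [Nat.sub_add_cancel hj1]
  have hconv : x * ∑ j ∈ Icc 1 (i + 1), a j * s (i + 1 - j) ≤
      (∑' j, a (j + 1) * x ^ (j + 1)) * s i :=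
    calc x * ∑ j ∈ Icc 1 (i + 1), a j * s (i + 1 - j)
        ≤ (∑ j ∈ Icc 1 (i + 1), a j * x ^ j) * s i := by
          rw [mul_sum, sum_mul]; exact sum_le_sum hterm
      _ ≤ (∑' j, a (j + 1) * x ^ (j + 1)) * s i := by
          gcongr
          · exact hs i
          · exact sum_Icc_one_le_tsum_succ (fun j => mul_nonneg (ha j) (pow_nonneg hx.le j)) hsum _
  linear_combination mul_le_mul_of_nonneg_left (hrec i) hx.le + hconv + s i * hroot

section Words

variable {α : Type*}

theorem ncard_length_eq_zero {L : Set (List α)} (hnil : [] ∈ L) :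
    {w | w ∈ L ∧ w.length = 0}.ncard = 1 :=
  Set.ncard_eq_one.2
    ⟨[], Set.eq_singleton_iff_unique_mem.2
      ⟨⟨hnil, rfl⟩, fun _ hw => List.eq_nil_of_length_eq_zero hw.2⟩⟩

theorem ncard_length_eq_mul_card_le [Finite α] {L L' : Set (List α)}
    (hL' : ∀ u ∈ L, ∀ c : α, u ++ [c] ∉ L → u ++ [c] ∈ L') (i : ℕ) :
    {w | w ∈ L ∧ w.length = i}.ncard * Nat.card α ≤
      {w | w ∈ L ∧ w.length = i + 1}.ncard + {w | w ∈ L' ∧ w.length = i + 1}.ncard := by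
  rw [← Set.ncard_univ α, ← Set.ncard_prod]
  refine (Set.ncard_le_ncard_of_injOn (fun p => p.1 ++ [p.2]) ?_ ?_ ?_).trans
    (Set.ncard_union_le _ _)
  · rintro ⟨u, c⟩ ⟨⟨hu, rfl⟩, -⟩
    by_cases hc : u ++ [c] ∈ L
    · exact Or.inl ⟨hc, by simp⟩
    · exact Or.inr ⟨hL' u hu c hc, by simp⟩
  · rintro ⟨u, c⟩ - ⟨v, d⟩ - h
    obtain ⟨rfl, h⟩ := List.append_inj' h rfl
    simp_all
  · exact ((List.finite_length_eq α _).union (List.finite_length_eq α _)).subset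
      (Set.union_subset_union (fun w hw => hw.2) fun w hw => hw.2)

end Words

theorem power_series_method_general (m : ℕ)
    (L : Set (List (Fin m)))
    (hnil : ([] : List (Fin m)) ∈ L)
    (n : ℕ → ℕ)
    (hn : ∀ i, n i = Set.ncard {w : List (Fin m) | w ∈ L ∧ w.length = i})
    (L' : Set (List (Fin m)))
    (hL' : L' = {w : List (Fin m) | w ∉ L ∧ w.take (w.length - 1) ∈ L})
    (a : ℕ → ℝ) (ha : ∀ j, 0 ≤ a j)
    (x₀ : ℝ) (hx₀ : 0 < x₀)
    (hsum : Summable (fun j : ℕ => a (j + 1) * x₀ ^ (j + 1)))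
    (hroot : 1 - (m : ℝ) * x₀ + ∑' j : ℕ, a (j + 1) * x₀ ^ (j + 1) = 0)
    (hbound : ∀ i : ℕ, 1 ≤ i →
      (Set.ncard {w : List (Fin m) | w ∈ L' ∧ w.length = i} : ℝ) ≤
        ∑ j ∈ Finset.Icc 1 i, a j * (n (i - j) : ℝ)) :
    ∀ i : ℕ, x₀ ^ (-(i : ℤ)) ≤ (n i : ℝ) := by
  have hextend : ∀ u ∈ L, ∀ c : Fin m, u ++ [c] ∉ L → u ++ [c] ∈ L' := fun u hu c hc =>
    hL' ▸ ⟨hc, by simpa using hu⟩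
  have hrec (i : ℕ) :
      (m : ℝ) * n i ≤ n (i + 1) + ∑ j ∈ Icc 1 (i + 1), a j * (n (i + 1 - j) : ℝ) := by
    have hcount := ncard_length_eq_mul_card_le hextend i
    rw [Nat.card_eq_fintype_card, Fintype.card_fin, ← hn, ← hn, mul_comm] at hcount
    calc (m : ℝ) * n i ≤ n (i + 1) + {w | w ∈ L' ∧ w.length = i + 1}.ncard := by
          exact_mod_cast hcount
      _ ≤ _ := add_le_add_right (hbound (i + 1) i.succ_pos) _
  have hratio := le_mul_succ_of_le_succ_add_convolution (fun i => (n i).cast_nonneg) ha hx₀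
    hsum hroot hrec
  intro i
  have hchain := le_pow_mul_of_le_mul_succ hx₀.le (fun k _ => hratio k) i.zero_le
  rw [hn 0, ncard_length_eq_zero hnil, Nat.sub_zero, Nat.cast_one] at hchain
  rw [zpow_neg, zpow_natCast]
  exact (inv_le_iff_one_le_mul₀' (pow_pos hx₀ i)).2 hchain

/-- Extended power series method: let `L` be a factorial language over an `m`-letter
alphabet containing the empty word and all words of length 1, let `n i` be the number
of words of length `i` in `L`, and let `L'` be the words outside `L` whose longest
proper prefix is in `L`.  If nonnegative reals `a j` and a positive real `x₀` satisfy
`1 - m·x₀ + ∑_{j≥1} a j · x₀^j = 0` (the series converging) and, for every `i ≥ 1`,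
the number of words of length `i` in `L'` is at most `∑_{j=1}^{i} a j · n (i-j)`,
then `n i ≥ x₀⁻ⁱ` for every `i`. -/
theorem power_series_method (m : ℕ) (hm : 1 ≤ m)
    (L : Set (List (Fin m)))
    (hfact : ∀ w ∈ L, ∀ u : List (Fin m), u <:+: w → u ∈ L)
    (hnil : ([] : List (Fin m)) ∈ L)
    (hone : ∀ w : List (Fin m), w.length = 1 → w ∈ L)
    (n : ℕ → ℕ)
    (hn : ∀ i, n i = Set.ncard {w : List (Fin m) | w ∈ L ∧ w.length = i})
    (L' : Set (List (Fin m)))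
    (hL' : L' = {w : List (Fin m) | w ∉ L ∧ w.take (w.length - 1) ∈ L})
    (a : ℕ → ℝ) (ha : ∀ j, 0 ≤ a j)
    (x₀ : ℝ) (hx₀ : 0 < x₀)
    (hsum : Summable (fun j : ℕ => a (j + 1) * x₀ ^ (j + 1)))
    (hroot : 1 - (m : ℝ) * x₀ + ∑' j : ℕ, a (j + 1) * x₀ ^ (j + 1) = 0)
    (hbound : ∀ i : ℕ, 1 ≤ i →
      (Set.ncard {w : List (Fin m) | w ∈ L' ∧ w.length = i} : ℝ) ≤
        ∑ j ∈ Finset.Icc 1 i, a j * (n (i - j) : ℝ)) :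
    ∀ i : ℕ, x₀ ^ (-(i : ℤ)) ≤ (n i : ℝ) :=
  power_series_method_general m L hnil n hn L' hL' a ha x₀ hx₀ hsum hroot hbound
end

section
/- If a pattern p has length at least 2^{v(p)}, then p contains a doubled pattern as a contiguous factor. -/
/-!
Induct on the length. Either `p` is itself doubled, or some variable `v` occurs in `p` exactly
once, say `p = a ++ v :: b`. The longer of `a` and `b` has length at least `(|p| - 1) / 2` and
at least one variable fewer than `p`, so the hypothesis `2 ^ v(·) ≤ |·|` passes to it.
-/

/-- A pattern is doubled if every variable occurring in it occurs at least twice. -/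
def Doubled {V : Type*} [DecidableEq V] (p : List V) : Prop :=
  ∀ v ∈ p, 2 ≤ p.count v

namespace List

variable {V : Type*} [DecidableEq V]

theorem exists_eq_append_cons_of_count_eq_one {p : List V} {v : V} (h : p.count v = 1) :
    ∃ a b, p = a ++ v :: b ∧ v ∉ a ∧ v ∉ b := by
  obtain ⟨a, b, rfl⟩ := append_of_mem (count_pos_iff.mp (by omega : 0 < p.count v))
  rw [count_append, count_cons_self] at h
  exact ⟨a, b, rfl, count_eq_zero.mp (by omega), count_eq_zero.mp (by omega)⟩

theorem exists_infix_not_mem_of_count_eq_one {p : List V} {v : V} (h : p.count v = 1) :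
    ∃ c, c <:+: p ∧ v ∉ c ∧ p.length ≤ 2 * c.length + 1 := by
  obtain ⟨a, b, rfl, hva, hvb⟩ := exists_eq_append_cons_of_count_eq_one h
  have hlen : (a ++ v :: b).length = a.length + b.length + 1 := by simp; omega
  rcases le_total b.length a.length with hba | hab
  · exact ⟨a, (prefix_append a (v :: b)).isInfix, hva, by omega⟩
  · exact ⟨b, (suffix_append (a ++ [v]) b).isInfix.trans (by simp), hvb, by omega⟩

theorem card_toFinset_lt_of_infix_of_not_mem {c p : List V} {v : V} (hc : c <:+: p)
    (hvp : v ∈ p) (hvc : v ∉ c) : c.toFinset.card < p.toFinset.card :=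
  Finset.card_lt_card <| Finset.ssubset_iff_of_subset (fun x hx ↦ by
    simpa using hc.subset (mem_toFinset.mp hx)) |>.mpr ⟨v, by simpa, by simpa⟩

theorem exists_doubled_infix_of_two_pow_card_le_length {p : List V}
    (hlen : 2 ^ p.toFinset.card ≤ p.length) : ∃ q, q ≠ [] ∧ q <:+: p ∧ Doubled q := by
  by_cases hd : Doubled p
  · exact ⟨p, ne_nil_of_length_pos (lt_of_lt_of_le (Nat.two_pow_pos _) hlen), infix_refl p, hd⟩
  obtain ⟨v, hvp, hv⟩ : ∃ v ∈ p, p.count v < 2 := by simpa [Doubled] using hd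
  obtain ⟨c, hcp, hvc, hc⟩ :=
    exists_infix_not_mem_of_count_eq_one (p := p) (v := v)
      (by have := count_pos_iff.mpr hvp; omega)
  have hshorter : c.length < p.length :=
    hcp.length_le.lt_of_ne fun h ↦ hvc (hcp.eq_of_length h ▸ hvp)
  have hcard := card_toFinset_lt_of_infix_of_not_mem hcp hvp hvc
  have hclen : 2 ^ c.toFinset.card ≤ c.length := by
    have : 2 * 2 ^ c.toFinset.card ≤ 2 ^ p.toFinset.card := by
      rw [← pow_succ']; exact Nat.pow_le_pow_right two_pos hcard
    omega
  obtain ⟨q, hq, hqc, hdq⟩ := exists_doubled_infix_of_two_pow_card_le_length hclen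
  exact ⟨q, hq, hqc.trans hcp, hdq⟩
termination_by p.length
decreasing_by exact hshorter

end List

theorem long_pattern_contains_doubled_factor_general {V : Type*} [DecidableEq V]
    (p : List V) (hlen : 2 ^ p.toFinset.card ≤ p.length) :
    ∃ q : List V, q ≠ [] ∧ q <:+: p ∧ Doubled q :=
  List.exists_doubled_infix_of_two_pow_card_le_length hlen

/-- If a pattern `p` has length at least `2^(v(p))`, where `v(p)` is the number of
distinct variables of `p`, then `p` contains a (nonempty) doubled pattern as a factor. -/
theorem long_pattern_contains_doubled_factor {V : Type*} [DecidableEq V]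
    (p : List V) (hp : p ≠ []) (hlen : 2 ^ p.toFinset.card ≤ p.length) :
    ∃ q : List V, q ≠ [] ∧ q <:+: p ∧ Doubled q :=
  long_pattern_contains_doubled_factor_general p hlen
end

section
/- Every doubled pattern with exactly 4 distinct variables and length at least 9 is 3-avoidable. Moreover, if such a pattern p has length exactly 9, then for every n ≥ 0 the number of words of length n over a 3-letter alphabet that avoid p is at least 2.941^n. -/
/-!
Counting argument in the style of Bell–Goh and Rampersad. Let `c v` be the number of occurrences
of the variable `v` in `p`, `a n` the number of avoiding words of length `n` over a `k`-letter
alphabet, and `β > 0`. A one-letter extension of an avoiding word either avoids `p`, or ends with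
an occurrence `h(p)` preceded by an avoiding word of length `n + 1 - |h(p)|`. Sorting these by the
lengths `ℓ v = |h v|` gives
`k a n ≤ a (n + 1) + ∑_ℓ k ^ (∑ ℓ v) a (n + 1 - ∑ c v ℓ v)`.
If `β a j ≤ a (j + 1)` for all `j < n`, the sum is at most `β a n ∏_v k / (β ^ c v - k)`, so
`β a n ≤ a (n + 1)` as soon as `β ∏_v k / (β ^ c v - k) ≤ k - β`. For `k = 3`, `β = 2.941` and a
doubled pattern with four variables and length at least `9` (so that some variable occurs at least
three times) this holds numerically, hence `a n ≥ 2.941 ^ n`. Avoiding words of every length give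
an infinite avoiding word by compactness of `ℕ → Fin 3`.
-/

/-- An occurrence of the pattern `p` in the word `w`: a non-erasing morphism
`h` (given by its values on variables) whose image of `p` is a factor of `w`. -/
def Occurs {V α : Type*} (p : List V) (w : List α) : Prop :=
  ∃ h : V → List α, (∀ v, h v ≠ []) ∧ (p.flatMap h) <:+: w

/-- A pattern is `k`-avoidable if some infinite word over a `k`-letter alphabet
contains no occurrence of it. -/
def IsKAvoidable {V : Type*} (k : ℕ) (p : List V) : Prop :=
  ∃ f : ℕ → Fin k, ∀ n : ℕ, ¬ Occurs p (List.ofFn fun i : Fin n => f i)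

section

open Finset

variable {V α : Type*}

theorem List.length_le_length_flatMap {p : List V} {h : V → List α} (hh : ∀ v, h v ≠ []) :
    p.length ≤ (p.flatMap h).length := by
  rw [List.length_flatMap, ← List.length_map (f := fun v => (h v).length)]
  exact List.length_le_sum_of_one_le _
    (by simpa [Nat.one_le_iff_ne_zero] using fun v _ => hh v)

theorem Occurs.mono {p : List V} {u w : List α} (h : Occurs p u) (huw : u <:+: w) :
    Occurs p w :=
  let ⟨f, hf, hu⟩ := h
  ⟨f, hf, hu.trans huw⟩

theorem Occurs.length_le {p : List V} {w : List α} (h : Occurs p w) : p.length ≤ w.length :=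
  let ⟨_, hf, hw⟩ := h
  (List.length_le_length_flatMap hf).trans hw.length_le

theorem exists_forall_not_occurs_ofFn [Finite α] {p : List V}
    (h : ∀ n, ∃ w : List α, w.length = n ∧ ¬ Occurs p w) :
    ∃ f : ℕ → α, ∀ n, ¬ Occurs p (List.ofFn fun i : Fin n => f i) := by
  let : TopologicalSpace α := ⊥
  have : DiscreteTopology α := ⟨rfl⟩
  let S : ℕ → Set (ℕ → α) := fun n => {f | ¬ Occurs p (List.ofFn fun i : Fin n => f i)}
  have hanti : ∀ n, S (n + 1) ⊆ S n := fun n f hf hocc =>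
    hf (hocc.mono (by rw [List.ofFn_succ']; exact (List.prefix_concat _ _).isInfix))
  have hne : ∀ n, (S n).Nonempty := by
    intro n
    obtain ⟨w, rfl, hw⟩ := h n
    obtain ⟨_ | ⟨a, -⟩, hu, -⟩ := h 1
    · exact absurd hu (by simp)
    refine ⟨fun i => w.getD i a, ?_⟩
    simpa only [S, Set.mem_ofPred_eq, List.getD_eq_getElem _ _ (Fin.is_lt _), List.ofFn_getElem]
  have hclosed : ∀ n, IsClosed (S n) := fun n =>
    (isClosed_discrete {g : Fin n → α | ¬ Occurs p (List.ofFn g)}).preimage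
      (f := fun (f : ℕ → α) (i : Fin n) => f i)
      (continuous_pi fun i => continuous_apply (i : ℕ))
  obtain ⟨f, hf⟩ := IsCompact.nonempty_iInter_of_sequence_nonempty_isCompact_isClosed S hanti
    hne (hclosed 0).isCompact hclosed
  exact ⟨f, Set.mem_iInter.mp hf⟩

theorem exists_prefix_append_flatMap_eq_concat {p : List V} {w : List α} {c : α}
    {h : V → List α} (hp : p ≠ []) (hh : ∀ v, h v ≠ []) (hw : ¬ Occurs p w)
    (hocc : p.flatMap h <:+: w ++ [c]) : ∃ x, x <+: w ∧ x ++ p.flatMap h = w ++ [c] := by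
  have hsuffix : p.flatMap h <:+ w ++ [c] :=
    (List.infix_concat_iff.mp hocc).resolve_right fun hinf => hw ⟨h, hh, hinf⟩
  obtain ⟨x, hx⟩ := hsuffix
  refine ⟨x, List.prefix_of_prefix_length_le ⟨_, hx⟩ (List.prefix_append w [c]) ?_, hx⟩
  have hlen := congrArg List.length hx
  have hpos := (List.length_pos_iff.mpr hp).trans_le (List.length_le_length_flatMap hh)
  simp only [List.length_append, List.length_singleton] at hlen
  omega

theorem sum_Icc_div_pow_le {k b : ℝ} (hk : 0 ≤ k) (hkb : k < b) (N : ℕ) :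
    ∑ i ∈ Icc 1 N, (k / b) ^ i ≤ k / (b - k) := by
  have hb : 0 < b := hk.trans_lt hkb
  calc ∑ i ∈ Icc 1 N, (k / b) ^ i = ∑ i ∈ Ico 1 (N + 1), (k / b) ^ i := rfl
    _ ≤ (k / b) ^ 1 / (1 - k / b) :=
      geom_sum_Ico_le_of_lt_one (by positivity) ((div_lt_one hb).mpr hkb)
    _ = k / (b - k) := by field_simp

theorem prod_div_pow_pow {ι : Type*} [Fintype ι] (k β : ℝ) (c ℓ : ι → ℕ) :
    ∏ i, (k / β ^ c i) ^ ℓ i = k ^ (∑ i, ℓ i) / β ^ (∑ i, c i * ℓ i) := by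
  simp only [div_pow, ← pow_mul, prod_div_distrib, prod_pow_eq_pow_sum]

theorem pow_sub_mul_le_of_forall_mul_le_succ {a : ℕ → ℝ} {β : ℝ} (hβ : 0 ≤ β) {n : ℕ}
    (h : ∀ j < n, β * a j ≤ a (j + 1)) {j : ℕ} (hj : j ≤ n) : β ^ (n - j) * a j ≤ a n := by
  induction n with
  | zero => simp [Nat.le_zero.mp hj]
  | succ n ih =>
    rcases hj.eq_or_lt with rfl | hj
    · simp
    calc β ^ (n + 1 - j) * a j = β * (β ^ (n - j) * a j) := by
          rw [Nat.sub_add_comm (Nat.lt_succ_iff.mp hj), pow_succ]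
          ring
      _ ≤ β * a n := by
          gcongr
          exact ih (fun i hi => h i (hi.trans n.lt_succ_self)) (Nat.lt_succ_iff.mp hj)
      _ ≤ a (n + 1) := h n n.lt_succ_self

section Shapes

variable [DecidableEq V] (p : List V)

def weight (ℓ : p.toFinset → ℕ) : ℕ :=
  ∑ v : p.toFinset, p.count v.1 * ℓ v

def substitute (g : p.toFinset → List α) : List α :=
  p.flatMap fun v => if hv : v ∈ p.toFinset then g ⟨v, hv⟩ else []

-- The length profiles `v ↦ |h v|` of the occurrences `h(p)` fitting in a word of length `n + 1`.
def shapes (n : ℕ) : Finset (p.toFinset → ℕ) :=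
  {ℓ ∈ Fintype.piFinset fun _ => Icc 1 (n + 1) | weight p ℓ ≤ n + 1}

variable {p}

theorem length_flatMap_eq_weight (h : V → List α) :
    (p.flatMap h).length = weight p fun v => (h v).length := by
  rw [weight, List.length_flatMap, sum_list_map_count, ← sum_coe_sort]
  rfl

theorem substitute_eq_flatMap (h : V → List α) : substitute p (fun v => h v) = p.flatMap h :=
  List.flatMap_congr fun _ hv => dif_pos (List.mem_toFinset.mpr hv)

theorem le_weight (ℓ : p.toFinset → ℕ) (v : p.toFinset) : ℓ v ≤ weight p ℓ :=
  calc ℓ v ≤ p.count v.1 * ℓ v :=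
        Nat.le_mul_of_pos_left _ (List.count_pos_iff.mpr (List.mem_toFinset.mp v.2))
    _ ≤ weight p ℓ := single_le_sum (f := fun v : p.toFinset => p.count v.1 * ℓ v)
          (fun _ _ => Nat.zero_le _) (mem_univ v)

theorem one_le_weight (hp : p ≠ []) {n : ℕ} {ℓ : p.toFinset → ℕ} (hℓ : ℓ ∈ shapes p n) :
    1 ≤ weight p ℓ := by
  obtain ⟨v, hv⟩ := List.exists_mem_of_ne_nil p hp
  simp only [shapes, mem_filter, Fintype.mem_piFinset, mem_Icc] at hℓ
  exact (hℓ.1 ⟨v, List.mem_toFinset.mpr hv⟩).1.trans (le_weight ℓ _)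

theorem sum_shapes_prod_le {k β : ℝ} (hk : 0 ≤ k) (hcount : ∀ v ∈ p, k < β ^ p.count v)
    (n : ℕ) : ∑ ℓ ∈ shapes p n, ∏ v, (k / β ^ p.count v.1) ^ ℓ v ≤
      ∏ v ∈ p.toFinset, k / (β ^ p.count v - k) := by
  have hr : ∀ v : p.toFinset, 0 ≤ k / β ^ p.count v.1 := fun v =>
    div_nonneg hk (hk.trans (hcount v (List.mem_toFinset.mp v.2)).le)
  calc ∑ ℓ ∈ shapes p n, ∏ v, (k / β ^ p.count v.1) ^ ℓ v
      ≤ ∑ ℓ ∈ Fintype.piFinset fun _ : p.toFinset => Icc 1 (n + 1),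
          ∏ v, (k / β ^ p.count v.1) ^ ℓ v :=
        sum_le_sum_of_subset_of_nonneg (filter_subset _ _) fun ℓ _ _ =>
          prod_nonneg fun v _ => pow_nonneg (hr v) (ℓ v)
    _ = ∏ v : p.toFinset, ∑ i ∈ Icc 1 (n + 1), (k / β ^ p.count v.1) ^ i :=
        (prod_univ_sum _ _).symm
    _ ≤ ∏ v : p.toFinset, k / (β ^ p.count v.1 - k) :=
        prod_le_prod (fun v _ => sum_nonneg fun i _ => pow_nonneg (hr v) i) fun v _ =>
          sum_Icc_div_pow_le hk (hcount v (List.mem_toFinset.mp v.2)) _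
    _ = ∏ v ∈ p.toFinset, k / (β ^ p.count v - k) :=
        prod_coe_sort p.toFinset fun v => k / (β ^ p.count v - k)

end Shapes

section Counting

variable (α) [Fintype α] [DecidableEq α]

def words (n : ℕ) : Finset (List α) :=
  univ.image (List.ofFn : (Fin n → α) → List α)

variable {α} in
theorem mem_words {n : ℕ} {w : List α} : w ∈ words α n ↔ w.length = n := by
  constructor
  · intro hw
    obtain ⟨f, -, rfl⟩ := mem_image.mp hw
    exact List.length_ofFn
  · rintro rfl
    exact mem_image.mpr ⟨fun i => w[(i : ℕ)], mem_univ _, List.ofFn_getElem⟩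

theorem card_words (n : ℕ) : #(words α n) = Fintype.card α ^ n := by
  rw [words, card_image_of_injective _ List.ofFn_injective, card_univ, Fintype.card_fun,
    Fintype.card_fin]

variable (p : List V)

open scoped Classical in
noncomputable def avoiding (n : ℕ) : Finset (List α) :=
  {w ∈ words α n | ¬ Occurs p w}

variable {α p} in
theorem mem_avoiding {n : ℕ} {w : List α} :
    w ∈ avoiding α p n ↔ w.length = n ∧ ¬ Occurs p w := by
  simp only [avoiding, mem_filter, mem_words]

variable {α p} in
theorem coe_avoiding (n : ℕ) :
    (avoiding α p n : Set (List α)) = {w | w.length = n ∧ ¬ Occurs p w} :=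
  Set.ext fun _ => mem_avoiding

variable {p} in
theorem avoiding_zero (hp : p ≠ []) : avoiding α p 0 = {[]} := by
  ext w
  rw [mem_avoiding, mem_singleton, List.length_eq_zero_iff]
  refine ⟨And.left, ?_⟩
  rintro rfl
  exact ⟨rfl, fun hocc => hp (List.length_eq_zero_iff.mp (Nat.le_zero.mp hocc.length_le))⟩

variable [DecidableEq V] {α p} {β : ℝ}

theorem exists_shape_of_occurs_concat (hp : p ≠ []) {n : ℕ} {w : List α} {c : α}
    (hw : w ∈ avoiding α p n) (hocc : Occurs p (w ++ [c])) :
    ∃ ℓ ∈ shapes p n, ∃ g ∈ Fintype.piFinset (fun v => words α (ℓ v)),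
      ∃ x ∈ avoiding α p (n + 1 - weight p ℓ), x ++ substitute p g = w ++ [c] := by
  obtain ⟨hwlen, hwav⟩ := mem_avoiding.mp hw
  obtain ⟨h, hh, hinf⟩ := hocc
  obtain ⟨x, hxw, hx⟩ := exists_prefix_append_flatMap_eq_concat hp hh hwav hinf
  have hlen : x.length + weight p (fun v => (h v).length) = n + 1 := by
    have := congrArg List.length hx
    rwa [List.length_append, length_flatMap_eq_weight, List.length_append,
      List.length_singleton, hwlen] at this
  have hle : ∀ v : p.toFinset, (h v).length ≤ n + 1 := fun v =>
    (le_weight (fun v => (h v).length) v).trans (by omega)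
  refine ⟨fun v => (h v).length, ?_, fun v => h v, ?_, x, ?_, by rw [substitute_eq_flatMap, hx]⟩
  · simp only [shapes, mem_filter, Fintype.mem_piFinset, mem_Icc]
    exact ⟨fun v => ⟨List.length_pos_iff.mpr (hh v), hle v⟩, by omega⟩
  · simp [Fintype.mem_piFinset, mem_words]
  · exact mem_avoiding.mpr ⟨by omega, fun hocc => hwav (hocc.mono hxw.isInfix)⟩

theorem card_mul_card_avoiding_le (hp : p ≠ []) (n : ℕ) :
    Fintype.card α * #(avoiding α p n) ≤ #(avoiding α p (n + 1)) +
      ∑ ℓ ∈ shapes p n, Fintype.card α ^ (∑ v, ℓ v) * #(avoiding α p (n + 1 - weight p ℓ)) := by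
  set extensions := (avoiding α p n ×ˢ univ).image fun wc : List α × α => wc.1 ++ [wc.2]
  have hcard : #extensions = Fintype.card α * #(avoiding α p n) := by
    rw [card_image_of_injective _ ?_, card_product, card_univ, mul_comm]
    rintro ⟨w, c⟩ ⟨w', c'⟩ h
    simpa using h
  have hsub : extensions ⊆ avoiding α p (n + 1) ∪ (shapes p n).biUnion fun ℓ =>
      image₂ (fun g x => x ++ substitute p g) (Fintype.piFinset fun v => words α (ℓ v))
        (avoiding α p (n + 1 - weight p ℓ)) := by
    simp only [extensions, image_subset_iff, mem_product, mem_univ, and_true]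
    rintro ⟨w, c⟩ hw
    rw [mem_union, mem_biUnion]
    by_cases hocc : Occurs p (w ++ [c])
    · right
      obtain ⟨ℓ, hℓ, g, hg, x, hx, heq⟩ := exists_shape_of_occurs_concat hp hw hocc
      exact ⟨ℓ, hℓ, mem_image₂.mpr ⟨g, hg, x, hx, heq⟩⟩
    · left
      exact mem_avoiding.mpr ⟨by simp [(mem_avoiding.mp hw).1], hocc⟩
  calc Fintype.card α * #(avoiding α p n) = #extensions := hcard.symm
    _ ≤ _ := card_le_card hsub
    _ ≤ _ := card_union_le _ _
    _ ≤ _ := by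
      gcongr
      refine card_biUnion_le.trans (sum_le_sum fun ℓ _ => (card_image₂_le _ _ _).trans_eq ?_)
      rw [Fintype.card_piFinset]
      simp only [card_words, prod_pow_eq_pow_sum]

theorem mul_card_avoiding_le_succ (hp : p ≠ []) (hβ : 0 < β)
    (hcount : ∀ v ∈ p, (Fintype.card α : ℝ) < β ^ p.count v)
    (hsum : β * ∏ v ∈ p.toFinset, (Fintype.card α : ℝ) / (β ^ p.count v - Fintype.card α) ≤
      Fintype.card α - β)
    {n : ℕ} (hgrowth : ∀ j ≤ n, β ^ (n - j) * #(avoiding α p j) ≤ #(avoiding α p n)) :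
    β * #(avoiding α p n) ≤ #(avoiding α p (n + 1)) := by
  set k : ℝ := (Fintype.card α : ℝ)
  set a : ℕ → ℝ := fun j => (#(avoiding α p j) : ℝ)
  have hterm : ∀ ℓ ∈ shapes p n, k ^ (∑ v, ℓ v) * a (n + 1 - weight p ℓ) ≤
      a n * (β * ∏ v, (k / β ^ p.count v.1) ^ ℓ v) := by
    intro ℓ hℓ
    obtain ⟨m, hm⟩ : ∃ m, weight p ℓ = m + 1 :=
      ⟨_, (Nat.sub_add_cancel (one_le_weight hp hℓ)).symm⟩
    have hmn : m + 1 ≤ n + 1 := hm ▸ (mem_filter.mp hℓ).2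
    have hprefix : β ^ m * a (n - m) ≤ a n := by
      simpa [Nat.sub_sub_self (Nat.le_of_succ_le_succ hmn)] using
        hgrowth (n - m) (Nat.sub_le n m)
    have hpow : β * ∏ v, (k / β ^ p.count v.1) ^ ℓ v = k ^ (∑ v, ℓ v) / β ^ m := by
      rw [prod_div_pow_pow, ← weight, hm, pow_succ']
      field_simp
    rw [hpow, hm, Nat.add_sub_add_right, mul_div_assoc', le_div_iff₀ (by positivity)]
    calc k ^ (∑ v, ℓ v) * a (n - m) * β ^ m = k ^ (∑ v, ℓ v) * (β ^ m * a (n - m)) := by ring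
      _ ≤ k ^ (∑ v, ℓ v) * a n := by gcongr
      _ = a n * k ^ (∑ v, ℓ v) := mul_comm _ _
  have hcard : k * a n ≤
      a (n + 1) + ∑ ℓ ∈ shapes p n, k ^ (∑ v, ℓ v) * a (n + 1 - weight p ℓ) := by
    simp only [k, a]
    exact_mod_cast card_mul_card_avoiding_le (α := α) hp n
  have hbad : ∑ ℓ ∈ shapes p n, k ^ (∑ v, ℓ v) * a (n + 1 - weight p ℓ) ≤ a n * (k - β) :=
    calc _ ≤ ∑ ℓ ∈ shapes p n, a n * (β * ∏ v, (k / β ^ p.count v.1) ^ ℓ v) := sum_le_sum hterm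
      _ = a n * (β * ∑ ℓ ∈ shapes p n, ∏ v, (k / β ^ p.count v.1) ^ ℓ v) := by
          rw [mul_sum, mul_sum]
      _ ≤ a n * (k - β) := by
          gcongr
          exact (mul_le_mul_of_nonneg_left (sum_shapes_prod_le (by positivity) hcount n)
            hβ.le).trans hsum
  linarith

theorem pow_le_card_avoiding (hp : p ≠ []) (hβ : 0 < β)
    (hcount : ∀ v ∈ p, (Fintype.card α : ℝ) < β ^ p.count v)
    (hsum : β * ∏ v ∈ p.toFinset, (Fintype.card α : ℝ) / (β ^ p.count v - Fintype.card α) ≤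
      Fintype.card α - β)
    (n : ℕ) : β ^ n ≤ #(avoiding α p n) := by
  have hstep : ∀ n, β * #(avoiding α p n) ≤ #(avoiding α p (n + 1)) := fun n =>
    Nat.strong_induction_on n fun n ih => mul_card_avoiding_le_succ hp hβ hcount hsum
      fun _ hj => pow_sub_mul_le_of_forall_mul_le_succ hβ.le ih hj
  simpa [avoiding_zero α hp] using
    pow_sub_mul_le_of_forall_mul_le_succ hβ.le (fun j _ => hstep j) (Nat.zero_le n)

end Counting

theorem List.exists_lt_count_of_mul_card_toFinset_lt [DecidableEq V] {p : List V} {m : ℕ}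
    (h : m * #p.toFinset < p.length) : ∃ v ∈ p, m < p.count v := by
  have hsum : ∑ _v ∈ p.toFinset, m < ∑ v ∈ p.toFinset, p.count v := by
    rwa [sum_const, smul_eq_mul, mul_comm, sum_toFinset_count_eq_length]
  obtain ⟨v, hv, hlt⟩ := Finset.exists_lt_of_sum_lt hsum
  exact ⟨v, List.mem_toFinset.mp hv, hlt⟩

theorem div_pow_sub_le_div_pow_sub {k b : ℝ} (hk : 0 ≤ k) (hb : 1 ≤ b) {c d : ℕ}
    (hkd : k < b ^ d) (hdc : d ≤ c) : k / (b ^ c - k) ≤ k / (b ^ d - k) := by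
  gcongr

theorem Doubled.prod_div_pow_count_sub_le [DecidableEq V] {p : List V} (hd : Doubled p)
    {k b : ℝ} (hk : 0 ≤ k) (hb : 1 ≤ b) (hkb : k < b ^ 2) {v₀ : V} (hv₀ : v₀ ∈ p)
    (h3 : 3 ≤ p.count v₀) :
    ∏ v ∈ p.toFinset, k / (b ^ p.count v - k) ≤
      (k / (b ^ 2 - k)) ^ (#p.toFinset - 1) * (k / (b ^ 3 - k)) := by
  have hle : ∀ v ∈ p, k / (b ^ p.count v - k) ≤ k / (b ^ 2 - k) := fun v hv =>
    div_pow_sub_le_div_pow_sub hk hb hkb (hd v hv)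
  have hnonneg : ∀ v ∈ p, 0 ≤ k / (b ^ p.count v - k) := fun v hv =>
    div_nonneg hk (sub_nonneg.mpr (hkb.le.trans (pow_le_pow_right₀ hb (hd v hv))))
  rw [← mul_prod_erase _ _ (List.mem_toFinset.mpr hv₀), mul_comm]
  have herase : ∀ v ∈ p.toFinset.erase v₀, v ∈ p := fun v hv =>
    List.mem_toFinset.mp (mem_of_mem_erase hv)
  refine mul_le_mul ?_ ?_ (hnonneg v₀ hv₀) (pow_nonneg ((hnonneg v₀ hv₀).trans (hle v₀ hv₀)) _)
  · rw [← card_erase_of_mem (List.mem_toFinset.mpr hv₀), ← prod_const]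
    exact prod_le_prod (fun v hv => hnonneg v (herase v hv)) fun v hv => hle v (herase v hv)
  · exact div_pow_sub_le_div_pow_sub hk hb (hkb.trans_le (pow_le_pow_right₀ hb (by norm_num)))
      h3

theorem Doubled.mul_prod_div_pow_count_sub_three_le [DecidableEq V] {p : List V}
    (hd : Doubled p) (hv : #p.toFinset = 4) (hlen : 9 ≤ p.length) :
    (2.941 : ℝ) * ∏ v ∈ p.toFinset, 3 / (2.941 ^ p.count v - 3) ≤ 3 - 2.941 := by
  obtain ⟨v₀, hv₀, h3⟩ := List.exists_lt_count_of_mul_card_toFinset_lt (p := p) (m := 2)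
    (by omega)
  calc _ ≤ 2.941 * ((3 / (2.941 ^ 2 - 3)) ^ (4 - 1) * (3 / (2.941 ^ 3 - 3)) : ℝ) := by
        gcongr
        simpa only [hv] using hd.prod_div_pow_count_sub_le (by norm_num) (by norm_num)
          (by norm_num) hv₀ h3
    _ ≤ 3 - 2.941 := by norm_num

end

/-- Every doubled pattern with exactly 4 distinct variables and length at least 9
is 3-avoidable; moreover, if its length is exactly 9 then for every `n` there are
at least `2.941 ^ n` ternary words of length `n` avoiding it. -/
theorem doubled_four_vars_length_ge_nine {V : Type*} [DecidableEq V]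
    (p : List V) (hd : Doubled p) (hv : p.toFinset.card = 4) (hlen : 9 ≤ p.length) :
    IsKAvoidable 3 p ∧
    (p.length = 9 → ∀ n : ℕ,
      (2.941 : ℝ) ^ n ≤
        (Set.ncard {w : List (Fin 3) | w.length = n ∧ ¬ Occurs p w} : ℝ)) := by
  have hp : p ≠ [] := by rintro rfl; simp at hlen
  have hcount : ∀ v ∈ p, (Fintype.card (Fin 3) : ℝ) < 2.941 ^ p.count v := fun v hv =>
    calc (Fintype.card (Fin 3) : ℝ) < 2.941 ^ 2 := by norm_num
      _ ≤ 2.941 ^ p.count v := pow_le_pow_right₀ (by norm_num) (hd v hv)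
  have hgrowth := pow_le_card_avoiding (α := Fin 3) hp (by norm_num) hcount
    (by simpa using hd.mul_prod_div_pow_count_sub_three_le hv hlen)
  refine ⟨exists_forall_not_occurs_ofFn fun n => ?_, fun _ n => ?_⟩
  · obtain ⟨w, hw⟩ := Finset.card_pos.mp (show 0 < (avoiding (Fin 3) p n).card by
      exact_mod_cast (pow_pos (by norm_num : (0 : ℝ) < 2.941) n).trans_le (hgrowth n))
    exact ⟨w, mem_avoiding.mp hw⟩
  · rw [← coe_avoiding, Set.ncard_coe_finset]
    exact hgrowth n
end

section
/- Every doubled pattern with exactly 5 distinct variables and length at least 11 is 3-avoidable. -/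
/-!
The counting ("power series") method. Let `A n` be the number of ternary words of length `n`
avoiding `p` and `β = 5 / 2`. A word of length `n + 1` whose prefix of length `n` avoids `p` but
which itself contains `p` is `u ++ h(p)` with `u` avoiding `p`; if the images `h v` have lengths
`ℓ v`, it is determined by `u`, of length `n + 1 - m` with `m = ∑ v, |p|_v * ℓ v`, and by the
`∑ v, ℓ v` letters of the words `h v`. If `A (i + 1) ≥ β * A i` for all `i < n`, then
`A (n + 1 - m) ≤ β ^ (1 - m) * A n`, and summing over all length profiles `ℓ` gives
`3 * A n ≤ A (n + 1) + β * (∏ v, ∑ ℓ ≥ 1, q_v ^ ℓ) * A n` with `q_v = 3 / β ^ |p|_v`.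
Every variable occurs at least twice and, as `|p| ≥ 11`, one of them at least three times, so the
product is at most `(24 / 101) * (12 / 13) ^ 4 < 1 / 5`, whence `A (n + 1) ≥ β * A n`. Thus there
are avoiding words of every length, and by compactness of `ℕ → Fin 3` an infinite one.
-/

open Finset

section Occurrences

variable {V α : Type*} {p : List V} {u w : List α}

theorem Occurs.of_isInfix (h : Occurs p u) (huw : u <:+: w) : Occurs p w :=
  let ⟨g, hg, hu⟩ := h
  ⟨g, hg, hu.trans huw⟩

theorem Occurs.of_map {W : Type*} {f : W → V} {q : List W} (h : Occurs (q.map f) w) :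
    Occurs q w :=
  let ⟨g, hg, hw⟩ := h
  ⟨g ∘ f, fun _ => hg _, by rwa [List.flatMap_map] at hw⟩

theorem not_occurs_nil (hp : p ≠ []) : ¬ Occurs p ([] : List α) := fun ⟨_, hg, hnil⟩ =>
  have ⟨v, hv⟩ := List.exists_mem_of_ne_nil p hp
  hg v (List.flatMap_eq_nil_iff.1 (List.eq_nil_of_infix_nil hnil) v hv)

theorem Occurs.exists_eq_append_flatMap (h : Occurs p w) (hw : ¬ Occurs p w.dropLast) :
    ∃ u g, (∀ v, g v ≠ []) ∧ w = u ++ p.flatMap g := by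
  obtain ⟨g, hg, s, t, rfl⟩ := h
  rcases List.eq_nil_or_concat t with rfl | ⟨t, a, rfl⟩
  · exact ⟨s, g, hg, by simp⟩
  · refine absurd ⟨g, hg, s, t, ?_⟩ hw
    simp [← List.append_assoc]

end Occurrences

section Words

variable (α : Type*) [Fintype α]

def wordsOfLength (n : ℕ) : Finset (List α) :=
  univ.map ⟨(List.ofFn : (Fin n → α) → List α), List.ofFn_injective⟩

variable {α} in
theorem mem_wordsOfLength {n : ℕ} {w : List α} : w ∈ wordsOfLength α n ↔ w.length = n := by
  rw [wordsOfLength, mem_map]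
  constructor
  · rintro ⟨f, -, rfl⟩
    exact List.length_ofFn
  · rintro rfl
    exact ⟨w.get, mem_univ _, List.ofFn_get w⟩

theorem card_wordsOfLength (n : ℕ) : #(wordsOfLength α n) = Fintype.card α ^ n := by
  simp [wordsOfLength]

variable {V : Type*} (p : List V)

open scoped Classical in
noncomputable def avoiders (n : ℕ) : Finset (List α) :=
  {w ∈ wordsOfLength α n | ¬ Occurs p w}

variable {α p} in
theorem mem_avoiders {n : ℕ} {w : List α} :
    w ∈ avoiders α p n ↔ w.length = n ∧ ¬ Occurs p w := by
  simp [avoiders, mem_wordsOfLength]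

end Words

theorem Fintype.sum_list_map_count {ι M : Type*} [Fintype ι] [DecidableEq ι]
    [AddCommMonoid M] (l : List ι) (f : ι → M) : (l.map f).sum = ∑ i, l.count i • f i := by
  rw [Finset.sum_list_map_count]
  refine Finset.sum_subset (subset_univ _) fun i _ hi => ?_
  rw [List.count_eq_zero_of_not_mem (mt List.mem_toFinset.2 hi), zero_smul]

section Profiles

variable {V : Type*} [Fintype V] [DecidableEq V] (p : List V)

def occurrenceLength (ℓ : V → ℕ) : ℕ := ∑ v, p.count v * ℓ v

theorem length_flatMap_eq_occurrenceLength {α : Type*} (g : V → List α) :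
    (p.flatMap g).length = occurrenceLength p fun v => (g v).length := by
  rw [List.length_flatMap, Fintype.sum_list_map_count]
  rfl

def lengthProfiles (N : ℕ) : Finset (V → ℕ) :=
  {ℓ ∈ Fintype.piFinset fun _ => Icc 1 N | occurrenceLength p ℓ ≤ N}

end Profiles

section Counting

variable (α : Type*) [Fintype α] {V : Type*} [Fintype V] [DecidableEq V] (p : List V)

open scoped Classical in
noncomputable def occurrencesWithProfile (N : ℕ) (ℓ : V → ℕ) : Finset (List α) :=
  (avoiders α p (N - occurrenceLength p ℓ) ×ˢ Fintype.piFinset fun v => wordsOfLength α (ℓ v)).image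
    fun x => x.1 ++ p.flatMap x.2

theorem card_occurrencesWithProfile_le (N : ℕ) (ℓ : V → ℕ) :
    #(occurrencesWithProfile α p N ℓ) ≤
      #(avoiders α p (N - occurrenceLength p ℓ)) * Fintype.card α ^ ∑ v, ℓ v := by
  classical
  refine card_image_le.trans_eq ?_
  simp only [card_product, Fintype.card_piFinset, card_wordsOfLength, prod_pow_eq_pow_sum]

variable {α p} in
theorem exists_mem_occurrencesWithProfile (hp : p ≠ []) (hV : ∀ v, v ∈ p) {w : List α}
    (hw : Occurs p w) (hdrop : ¬ Occurs p w.dropLast) :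
    ∃ ℓ ∈ lengthProfiles p w.length, w ∈ occurrencesWithProfile α p w.length ℓ := by
  classical
  obtain ⟨u, g, hg, rfl⟩ := hw.exists_eq_append_flatMap hdrop
  have hm := length_flatMap_eq_occurrenceLength p g
  have hflat : p.flatMap g ≠ [] := fun h =>
    have ⟨v, hv⟩ := List.exists_mem_of_ne_nil p hp
    hg v (List.flatMap_eq_nil_iff.1 h v hv)
  refine ⟨fun v => (g v).length, ?_, ?_⟩
  · refine mem_filter.2 ⟨Fintype.mem_piFinset.2 fun v => mem_Icc.2 ⟨?_, ?_⟩, by simp [← hm]⟩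
    · exact List.length_pos_iff.2 (hg v)
    · calc (g v).length ≤ p.count v * (g v).length :=
            Nat.le_mul_of_pos_left _ (List.count_pos_iff.2 (hV v))
        _ ≤ occurrenceLength p fun v => (g v).length :=
            single_le_sum (f := fun v => p.count v * (g v).length) (by simp) (mem_univ v)
        _ ≤ (u ++ p.flatMap g).length := by simp [← hm]
  · refine mem_image.2 ⟨(u, g), mem_product.2 ⟨mem_avoiders.2 ⟨by simp [← hm], fun hu => ?_⟩,
      Fintype.mem_piFinset.2 fun v => mem_wordsOfLength.2 rfl⟩, rfl⟩
    refine hdrop (hu.of_isInfix (List.IsPrefix.isInfix ⟨(p.flatMap g).dropLast, ?_⟩))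
    rw [List.dropLast_append_of_ne_nil hflat]

theorem card_mul_card_avoiders_le (hp : p ≠ []) (hV : ∀ v, v ∈ p) (n : ℕ) :
    Fintype.card α * #(avoiders α p n) ≤ #(avoiders α p (n + 1)) +
      ∑ ℓ ∈ lengthProfiles p (n + 1),
        #(avoiders α p (n + 1 - occurrenceLength p ℓ)) * Fintype.card α ^ ∑ v, ℓ v := by
  classical
  let extensions := (avoiders α p n ×ˢ univ).image fun x : List α × α => x.1 ++ [x.2]
  have hcard : #extensions = Fintype.card α * #(avoiders α p n) := by
    rw [card_image_of_injective _ fun x y hxy => ?_, card_product, card_univ, mul_comm]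
    obtain ⟨h1, h2⟩ := List.append_inj' hxy rfl
    exact Prod.ext h1 (List.singleton_inj.1 h2)
  have hsub : extensions ⊆ avoiders α p (n + 1) ∪
      (lengthProfiles p (n + 1)).biUnion (occurrencesWithProfile α p (n + 1)) := by
    simp only [extensions, image_subset_iff, mem_product, mem_avoiders, and_imp, Prod.forall]
    intro u a hu hocc _
    have hlen : (u ++ [a]).length = n + 1 := by simp [hu]
    by_cases hw : Occurs p (u ++ [a])
    · obtain ⟨ℓ, hℓ, hmem⟩ :=
        exists_mem_occurrencesWithProfile hp hV hw (by rwa [List.dropLast_concat])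
      rw [hlen] at hℓ hmem
      exact mem_union_right _ (mem_biUnion.2 ⟨ℓ, hℓ, hmem⟩)
    · exact mem_union_left _ (mem_avoiders.2 ⟨hlen, hw⟩)
  calc Fintype.card α * #(avoiders α p n) = #extensions := hcard.symm
    _ ≤ _ := card_le_card hsub
    _ ≤ _ := card_union_le _ _
    _ ≤ _ := by
      gcongr
      exact card_biUnion_le.trans (sum_le_sum fun ℓ _ => card_occurrencesWithProfile_le α p _ ℓ)

end Counting

theorem pow_mul_le_of_forall_mul_le_succ {a : ℕ → ℝ} {β : ℝ} (hβ : 0 ≤ β) {n : ℕ}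
    (h : ∀ i < n, β * a i ≤ a (i + 1)) {i j : ℕ} (hij : i + j ≤ n) :
    β ^ j * a i ≤ a (i + j) := by
  induction j with
  | zero => simp
  | succ j ih =>
    calc β ^ (j + 1) * a i = β * (β ^ j * a i) := by ring
      _ ≤ β * a (i + j) := by gcongr; exact ih (by omega)
      _ ≤ a (i + (j + 1)) := h _ (by omega)

section Growth

variable {α : Type*} [Fintype α] {V : Type*} [Fintype V] [DecidableEq V] {p : List V} {β : ℝ}

theorem sum_lengthProfiles_le (hp : p ≠ []) (hβ : 0 < β)
    (hq : ∀ v, (Fintype.card α : ℝ) / β ^ p.count v < 1) {n : ℕ}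
    (hgrowth : ∀ i < n, β * #(avoiders α p i) ≤ #(avoiders α p (i + 1))) :
    ∑ ℓ ∈ lengthProfiles p (n + 1),
        (#(avoiders α p (n + 1 - occurrenceLength p ℓ)) * Fintype.card α ^ ∑ v, ℓ v : ℝ) ≤
      β * (∏ v, (Fintype.card α / β ^ p.count v) / (1 - Fintype.card α / β ^ p.count v)) *
        #(avoiders α p n) := by
  set A : ℕ → ℝ := fun i => #(avoiders α p i)
  set k : ℝ := (Fintype.card α : ℝ)
  set q : V → ℝ := fun v => k / β ^ p.count v
  have hterm : ∀ ℓ ∈ lengthProfiles p (n + 1),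
      A (n + 1 - occurrenceLength p ℓ) * k ^ ∑ v, ℓ v ≤ β * (∏ v, q v ^ ℓ v) * A n := by
    intro ℓ hℓ
    simp only [lengthProfiles, mem_filter, Fintype.mem_piFinset, mem_Icc] at hℓ
    obtain ⟨v, hv⟩ := List.exists_mem_of_ne_nil p hp
    obtain ⟨j, hj⟩ : ∃ j, occurrenceLength p ℓ = j + 1 := Nat.exists_eq_add_one.2 <|
      (Nat.mul_pos (List.count_pos_iff.2 hv) (hℓ.1 v).1).trans_le
        (single_le_sum (f := fun v => p.count v * ℓ v) (by simp) (mem_univ v))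
    have hchain : β ^ j * A (n + 1 - occurrenceLength p ℓ) ≤ A n := by
      simpa [show n + 1 - occurrenceLength p ℓ + j = n by omega] using
        pow_mul_le_of_forall_mul_le_succ hβ.le hgrowth (i := n + 1 - occurrenceLength p ℓ) (j := j)
          (by omega)
    have hprod : β * ∏ v, q v ^ ℓ v = k ^ (∑ v, ℓ v) / β ^ j := by
      simp only [q, div_pow, ← pow_mul, prod_div_distrib, prod_pow_eq_pow_sum]
      rw [← occurrenceLength, hj, pow_succ]
      field_simp
    rw [hprod, div_mul_eq_mul_div, le_div_iff₀ (by positivity)]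
    calc A (n + 1 - occurrenceLength p ℓ) * k ^ (∑ v, ℓ v) * β ^ j
        = k ^ (∑ v, ℓ v) * (β ^ j * A (n + 1 - occurrenceLength p ℓ)) := by ring
      _ ≤ k ^ (∑ v, ℓ v) * A n := by gcongr
  calc _ ≤ ∑ ℓ ∈ lengthProfiles p (n + 1), β * (∏ v, q v ^ ℓ v) * A n := sum_le_sum hterm
    _ ≤ ∑ ℓ ∈ Fintype.piFinset fun _ => Icc 1 (n + 1), β * (∏ v, q v ^ ℓ v) * A n :=
      sum_le_sum_of_subset_of_nonneg (filter_subset _ _) fun _ _ _ => by positivity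
    _ = β * (∏ v, ∑ i ∈ Icc 1 (n + 1), q v ^ i) * A n := by
      rw [prod_univ_sum, ← sum_mul, ← mul_sum]
    _ ≤ β * (∏ v, q v / (1 - q v)) * A n := by
      gcongr with v
      rw [← Ico_add_one_right_eq_Icc]
      simpa using geom_sum_Ico_le_of_lt_one (x := q v) (m := 1) (by positivity) (hq v)

theorem mul_card_avoiders_le_card_avoiders_succ (hp : p ≠ []) (hV : ∀ v, v ∈ p) (hβ : 0 < β)
    (hq : ∀ v, (Fintype.card α : ℝ) / β ^ p.count v < 1)
    (hbound : β * ∏ v, (Fintype.card α / β ^ p.count v) / (1 - Fintype.card α / β ^ p.count v) ≤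
      Fintype.card α - β) (n : ℕ) :
    β * #(avoiders α p n) ≤ #(avoiders α p (n + 1)) := by
  induction n using Nat.strong_induction_on with
  | _ n ih =>
    have hcount : (Fintype.card α * #(avoiders α p n) : ℝ) ≤ #(avoiders α p (n + 1)) +
        ∑ ℓ ∈ lengthProfiles p (n + 1),
          (#(avoiders α p (n + 1 - occurrenceLength p ℓ)) * Fintype.card α ^ ∑ v, ℓ v : ℝ) := by
      exact_mod_cast card_mul_card_avoiders_le α p hp hV n
    have hsum := sum_lengthProfiles_le hp hβ hq ih
    have := mul_le_mul_of_nonneg_right hbound (Nat.cast_nonneg (α := ℝ) #(avoiders α p n))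
    linarith

end Growth

theorem exists_forall_ofFn_of_forall_length {α : Type*} [Finite α] {P : List α → Prop}
    (hP : ∀ ⦃u w⦄, u <+: w → P w → P u) (h : ∀ n, ∃ w, w.length = n ∧ P w) :
    ∃ f : ℕ → α, ∀ n, P (List.ofFn fun i : Fin n => f i) := by
  let _ : TopologicalSpace α := ⊥
  have : DiscreteTopology α := ⟨rfl⟩
  obtain ⟨a⟩ : Nonempty α := by
    obtain ⟨w, hw, -⟩ := h 1
    exact ⟨w.head (List.ne_nil_of_length_pos (by omega))⟩
  let S : ℕ → Set (ℕ → α) := fun n => {f | P (List.ofFn fun i : Fin n => f i)}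
  have hS_antitone : ∀ n, S (n + 1) ⊆ S n := fun n f hf =>
    hP ⟨[f n], by rw [List.ofFn_succ']; simp⟩ hf
  have hS_nonempty : ∀ n, (S n).Nonempty := fun n => by
    obtain ⟨w, rfl, hw⟩ := h n
    exact ⟨fun i => w.getD i a, by simpa [S, List.ofFn_getElem] using hw⟩
  have hS_closed : ∀ n, IsClosed (S n) := fun n =>
    have hprefix : Continuous fun (f : ℕ → α) (i : Fin n) => f i :=
      continuous_pi fun i => continuous_apply _
    (isClosed_discrete {g : Fin n → α | P (List.ofFn g)}).preimage hprefix
  obtain ⟨f, hf⟩ := IsCompact.nonempty_iInter_of_sequence_nonempty_isCompact_isClosed S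
    hS_antitone hS_nonempty (hS_closed 0).isCompact hS_closed
  exact ⟨f, Set.mem_iInter.1 hf⟩

theorem exists_forall_not_occurs_of_prod_univ_le {α : Type*} [Fintype α] {V : Type*} [Fintype V]
    [DecidableEq V] {p : List V} {β : ℝ} (hp : p ≠ []) (hV : ∀ v, v ∈ p) (hβ : 0 < β)
    (hq : ∀ v, (Fintype.card α : ℝ) / β ^ p.count v < 1)
    (hbound : β * ∏ v, (Fintype.card α / β ^ p.count v) / (1 - Fintype.card α / β ^ p.count v) ≤
      Fintype.card α - β) :
    ∃ f : ℕ → α, ∀ n, ¬ Occurs p (List.ofFn fun i : Fin n => f i) := by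
  have hpos : ∀ n, 0 < #(avoiders α p n) := by
    intro n
    induction n with
    | zero => exact card_pos.2 ⟨[], mem_avoiders.2 ⟨rfl, not_occurs_nil hp⟩⟩
    | succ n ih =>
      have := mul_card_avoiders_le_card_avoiders_succ hp hV hβ hq hbound n
      exact_mod_cast (by positivity : (0 : ℝ) < β * #(avoiders α p n)).trans_le this
  refine exists_forall_ofFn_of_forall_length (P := fun w => ¬ Occurs p w)
    (fun u w huw hw hu => hw (hu.of_isInfix huw.isInfix)) fun n => ?_
  obtain ⟨w, hw⟩ := card_pos.1 (hpos n)
  exact ⟨w, mem_avoiders.1 hw⟩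

theorem exists_forall_not_occurs_of_prod_toFinset_le {α : Type*} [Fintype α] {V : Type*}
    [DecidableEq V] {p : List V} {β : ℝ} (hp : p ≠ []) (hβ : 0 < β)
    (hq : ∀ v ∈ p, (Fintype.card α : ℝ) / β ^ p.count v < 1)
    (hbound : β * ∏ v ∈ p.toFinset,
        (Fintype.card α / β ^ p.count v) / (1 - Fintype.card α / β ^ p.count v) ≤
      Fintype.card α - β) :
    ∃ f : ℕ → α, ∀ n, ¬ Occurs p (List.ofFn fun i : Fin n => f i) := by
  -- `List.count_attach` is about `Subtype.instBEq`, not the `BEq` derived from `DecidableEq`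
  have hcount (v : {x // x ∈ p}) : @List.count _ instBEqOfDecidableEq v p.attach = p.count v.1 := by
    convert List.count_attach using 2
    exact lawful_beq_subsingleton _ _
  rw [prod_subtype (p := (· ∈ p)) p.toFinset fun _ => List.mem_toFinset] at hbound
  obtain ⟨f, hf⟩ := exists_forall_not_occurs_of_prod_univ_le (α := α) (p := p.attach)
    (by simpa using hp) (List.mem_attach p) hβ (fun v => by simpa only [hcount] using hq v v.2)
    (by simpa only [hcount] using hbound)
  refine ⟨f, fun n hocc => hf n (Occurs.of_map (f := Subtype.val) ?_)⟩
  rwa [List.attach_map_subtype_val]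

theorem div_pow_le_div_pow_of_le {a b : ℝ} (ha : 0 ≤ a) (hb : 1 ≤ b) {m n : ℕ} (hmn : m ≤ n) :
    a / b ^ n ≤ a / b ^ m :=
  div_le_div_of_nonneg_left ha (by positivity) (pow_le_pow_right₀ hb hmn)

theorem three_div_five_halves_pow_lt_one {c : ℕ} (hc : 2 ≤ c) : (3 : ℝ) / (5 / 2) ^ c < 1 :=
  (div_pow_le_div_pow_of_le (by norm_num) (by norm_num) hc).trans_lt (by norm_num)

theorem div_one_sub_le_div_one_sub {a b : ℝ} (ha : 0 ≤ a) (hab : a ≤ b) (hb : b < 1) :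
    a / (1 - a) ≤ b / (1 - b) :=
  div_le_div₀ (ha.trans hab) hab (by linarith) (by linarith)

theorem five_halves_mul_prod_le {ι : Type*} [DecidableEq ι] {s : Finset ι} {c : ι → ℕ}
    (hcard : #s = 5) (hc : ∀ i ∈ s, 2 ≤ c i) (hsum : 11 ≤ ∑ i ∈ s, c i) :
    (5 / 2 : ℝ) * ∏ i ∈ s, (3 / (5 / 2) ^ c i) / (1 - 3 / (5 / 2) ^ c i) ≤ 3 - 5 / 2 := by
  set g : ℕ → ℝ := fun c => (3 / (5 / 2) ^ c) / (1 - 3 / (5 / 2) ^ c)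
  have hg_nonneg : ∀ {c}, 2 ≤ c → 0 ≤ g c := fun hc =>
    div_nonneg (by positivity) (sub_nonneg.2 (three_div_five_halves_pow_lt_one hc).le)
  have hg_anti : ∀ {c₀ c}, 2 ≤ c₀ → c₀ ≤ c → g c ≤ g c₀ := fun hc₀ h =>
    div_one_sub_le_div_one_sub (by positivity)
      (div_pow_le_div_pow_of_le (by norm_num) (by norm_num) h)
      (three_div_five_halves_pow_lt_one hc₀)
  obtain ⟨i₀, hi₀s, hi₀⟩ : ∃ i ∈ s, 2 < c i :=
    exists_lt_of_sum_lt (by simp only [sum_const, hcard, smul_eq_mul]; omega)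
  calc (5 / 2 : ℝ) * ∏ i ∈ s, g (c i) = 5 / 2 * (g (c i₀) * ∏ i ∈ s.erase i₀, g (c i)) := by
        rw [mul_prod_erase s (fun i => g (c i)) hi₀s]
    _ ≤ 5 / 2 * (g 3 * ∏ i ∈ s.erase i₀, g 2) := by
        gcongr with i hi
        · exact prod_nonneg fun i hi => hg_nonneg (hc i (mem_of_mem_erase hi))
        · exact hg_anti (by norm_num) hi₀
        · exact fun i hi => hg_nonneg (hc i (mem_of_mem_erase hi))
        · exact hg_anti le_rfl (hc i (mem_of_mem_erase hi))
    _ = 5 / 2 * (g 3 * g 2 ^ 4) := by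
        rw [prod_const, card_erase_of_mem hi₀s, hcard]
    _ ≤ 3 - 5 / 2 := by norm_num [g]

/-- Every doubled pattern with exactly 5 distinct variables and length at least 11
is 3-avoidable. -/
theorem doubled_five_vars_length_ge_eleven {V : Type*} [DecidableEq V]
    (p : List V) (hd : Doubled p) (hv : p.toFinset.card = 5) (hlen : 11 ≤ p.length) :
    IsKAvoidable 3 p := by
  have hsum : 11 ≤ ∑ v ∈ p.toFinset, p.count v := by rwa [List.sum_toFinset_count_eq_length]
  have hdoubled : ∀ v ∈ p.toFinset, 2 ≤ p.count v := fun v hvp => hd v (List.mem_toFinset.1 hvp)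
  exact exists_forall_not_occurs_of_prod_toFinset_le (α := Fin 3) (β := 5 / 2)
    (List.ne_nil_of_length_pos (by omega)) (by norm_num)
    (by simpa using fun v hvp => three_div_five_halves_pow_lt_one (hd v hvp))
    (by simpa using five_halves_mul_prod_le hv hdoubled hsum)
end

section
/- For all integers n ≥ 1 and k ≥ 1, every word of length n^k over a k-letter alphabet contains a nonempty n-splitted factor. -/
/-- A word `w` is `n`-splitted if `n` divides `|w|` and each of the `n` consecutive
blocks of length `|w|/n` of `w` contains every letter occurring in `w`. -/
def IsNSplitted {α : Type*} (n : ℕ) (w : List α) : Prop :=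
  n ∣ w.length ∧
    ∀ i < n, ∀ a ∈ w, a ∈ (w.drop (i * (w.length / n))).take (w.length / n)

/-!
Induct on the number `k` of distinct letters, for words of length `n ^ k`. A word `w` of
length `n ^ (k + 1)` is either `n`-splitted itself, or one of its `n` blocks, a factor of
length `n ^ k`, misses a letter of `w` and so has at most `k` distinct letters.
-/

variable {α : Type*}

def nBlock (n : ℕ) (w : List α) (i : ℕ) : List α :=
  (w.drop (i * (w.length / n))).take (w.length / n)

theorem nBlock_infix (n : ℕ) (w : List α) (i : ℕ) : nBlock n w i <:+: w :=
  (List.take_prefix _ _).isInfix.trans (List.drop_suffix _ _).isInfix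

theorem length_nBlock {n : ℕ} {w : List α} (hdvd : n ∣ w.length) {i : ℕ} (hi : i < n) :
    (nBlock n w i).length = w.length / n := by
  obtain ⟨m, hm⟩ := hdvd
  rcases Nat.eq_zero_or_pos n with rfl | hn
  · simp [nBlock]
  have hmul : (i + 1) * m ≤ n * m := Nat.mul_le_mul_right m hi
  simp only [nBlock, List.length_take, List.length_drop, hm, Nat.mul_div_cancel_left m hn]
  rw [add_one_mul] at hmul
  omega

theorem List.card_toFinset_lt_of_subset_of_notMem [DecidableEq α] {v w : List α} (hvw : v ⊆ w)
    {a : α} (haw : a ∈ w) (hav : a ∉ v) : v.toFinset.card < w.toFinset.card :=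
  Finset.card_lt_card <|
    (Finset.ssubset_iff_of_subset fun _ hx => List.mem_toFinset.2 (hvw (List.mem_toFinset.1 hx))).2
      ⟨a, List.mem_toFinset.2 haw, mt List.mem_toFinset.1 hav⟩

theorem exists_nsplitted_infix_of_card_toFinset_le [DecidableEq α] {n : ℕ} (hn : 0 < n) :
    ∀ {k : ℕ} {w : List α}, w.length = n ^ k → w.toFinset.card ≤ k →
      ∃ u, u ≠ [] ∧ u <:+: w ∧ IsNSplitted n u
  | 0, w, hw, hcard => by
    have hne : w ≠ [] := List.ne_nil_of_length_pos (by simp [hw])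
    have := (List.toFinset_nonempty_iff w).2 hne |>.card_pos
    omega
  | k + 1, w, hw, hcard => by
    have hdvd : n ∣ w.length := hw ▸ Dvd.intro_left _ (pow_succ n k).symm
    by_cases hsplit : IsNSplitted n w
    · exact ⟨w, List.ne_nil_of_length_pos (hw ▸ by positivity), List.infix_refl w, hsplit⟩
    obtain ⟨i, hi, a, haw, haBlock⟩ : ∃ i < n, ∃ a ∈ w, a ∉ nBlock n w i := by
      simpa [IsNSplitted, nBlock, hdvd] using hsplit
    have hlen : (nBlock n w i).length = n ^ k := by
      rw [length_nBlock hdvd hi, hw, pow_succ, Nat.mul_div_cancel _ hn]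
    have hcard' : (nBlock n w i).toFinset.card ≤ k := by
      have := List.card_toFinset_lt_of_subset_of_notMem (nBlock_infix n w i).subset haw haBlock
      omega
    obtain ⟨u, hu, huw, husplit⟩ := exists_nsplitted_infix_of_card_toFinset_le hn hlen hcard'
    exact ⟨u, hu, huw.trans (nBlock_infix n w i), husplit⟩

theorem exists_nsplitted_factor_general (n k : ℕ) (hn : 1 ≤ n)
    (w : List (Fin k)) (hw : w.length = n ^ k) :
    ∃ u : List (Fin k), u ≠ [] ∧ u <:+: w ∧ IsNSplitted n u :=
  exists_nsplitted_infix_of_card_toFinset_le hn hw <|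
    (Finset.card_le_univ _).trans_eq (Fintype.card_fin k)

/-- For all `n ≥ 1` and `k ≥ 1`, every word of length `n ^ k` over a `k`-letter
alphabet contains a nonempty `n`-splitted factor. -/
theorem exists_nsplitted_factor (n k : ℕ) (hn : 1 ≤ n) (hk : 1 ≤ k)
    (w : List (Fin k)) (hw : w.length = n ^ k) :
    ∃ u : List (Fin k), u ≠ [] ∧ u <:+: w ∧ IsNSplitted n u :=
  exists_nsplitted_factor_general n k hn w hw
end
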